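/- Suppose (R, B, L) forms a Hadamard triple on ℝ^d, let n ≥ 1, and set 𝐁_n = B + RB + ⋯ + R^{n-1}B and 𝐋_n = L + RᵗL + ⋯ + (Rᵗ)^{n-1}L. If 𝐋̃_n ⊂ ℤ^d is obtained from 𝐋_n by replacing each element l ∈ 𝐋_n with l + (Rᵗ)ⁿ m_l for some m_l ∈ ℤ^d (i.e. 𝐋̃_n ≡ 𝐋_n (mod (Rᵗ)ⁿℤ^d)), then (Rⁿ, 𝐁_n, 𝐋̃_n) is also a Hadamard triple. -/

import Mathlib

open MeasureTheory Filter Set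
open scoped ENNReal RealInnerProductSpace ComplexConjugate Pointwise Topology

noncomputable section

/-- Cast an integer vector to a point of Euclidean space. -/
def intCast {d : ℕ} (v : Fin d → ℤ) : EuclideanSpace ℝ (Fin d) :=
  (WithLp.equiv 2 (Fin d → ℝ)).symm fun i => (v i : ℝ)

/-- The real matrix obtained from an integer matrix. -/
def matR {d : ℕ} (R : Matrix (Fin d) (Fin d) ℤ) : Matrix (Fin d) (Fin d) ℝ :=
  R.map (Int.cast : ℤ → ℝ)

/-- Matrix action on Euclidean space. -/
def mulVecE {d : ℕ} (A : Matrix (Fin d) (Fin d) ℝ) (x : EuclideanSpace ℝ (Fin d)) :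
    EuclideanSpace ℝ (Fin d) :=
  (WithLp.equiv 2 (Fin d → ℝ)).symm (A.mulVec ((WithLp.equiv 2 (Fin d → ℝ)) x))

/-- A matrix is expansive if all of its (complex) eigenvalues have modulus > 1. -/
def IsExpansive {d : ℕ} (R : Matrix (Fin d) (Fin d) ℤ) : Prop :=
  ∀ z : ℂ, (R.map (Int.cast : ℤ → ℂ)).charpoly.IsRoot z → 1 < ‖z‖

/-- The matrix `H = (1/√q) (e^{-2πi ⟨R⁻¹ b, l⟩})_{b ∈ B, l ∈ L}`. -/
def hadamardMatrix {d : ℕ} (R : Matrix (Fin d) (Fin d) ℤ) (B L : Finset (Fin d → ℤ)) :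
    Matrix {b // b ∈ B} {l // l ∈ L} ℂ :=
  fun b l =>
    ((1 / Real.sqrt (B.card) : ℝ) : ℂ) *
      Complex.exp (((-(2 * Real.pi *
        (dotProduct ((matR R)⁻¹.mulVec (fun i => ((b : Fin d → ℤ) i : ℝ)))
          (fun i => ((l : Fin d → ℤ) i : ℝ)))) : ℝ) : ℂ) * Complex.I)

/-- `(R, B, L)` is a Hadamard triple: `#B = #L` and the matrix
`H = (1/√q) (e^{-2πi ⟨R⁻¹ b, l⟩})_{b ∈ B, l ∈ L}` is unitary (`H* H = I`). -/
def IsHadamardTriple {d : ℕ} (R : Matrix (Fin d) (Fin d) ℤ) (B L : Finset (Fin d → ℤ)) : Prop :=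
  B.card = L.card ∧ Matrix.conjTranspose (hadamardMatrix R B L) * hadamardMatrix R B L = 1

/-- The self-affine measure `μ(R,B)`: the (unique) Borel probability measure with
invariance `μ(E) = (1/#B) ∑_{b ∈ B} μ(τ_b⁻¹ E)` for `τ_b x = R⁻¹(x + b)`. -/
def IsSelfAffine {d : ℕ} (R : Matrix (Fin d) (Fin d) ℤ) (B : Finset (Fin d → ℤ))
    (μ : Measure (EuclideanSpace ℝ (Fin d))) : Prop :=
  IsProbabilityMeasure μ ∧
  ∀ E : Set (EuclideanSpace ℝ (Fin d)), MeasurableSet E →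
    μ E = (B.card : ℝ≥0∞)⁻¹ *
      ∑ b ∈ B, μ ((fun x => mulVecE (matR R)⁻¹ (x + intCast b)) ⁻¹' E)

/-- The Fourier transform `μ̂(ξ) = ∫ e^{-2πi⟨ξ,x⟩} dμ(x)` of a measure. -/
def muHat {d : ℕ} (μ : Measure (EuclideanSpace ℝ (Fin d))) (ξ : EuclideanSpace ℝ (Fin d)) : ℂ :=
  ∫ x, Complex.exp (((-(2 * Real.pi * (inner ℝ ξ x : ℝ)) : ℝ) : ℂ) * Complex.I) ∂μ

/-- The exponential function `e_l(x) = e^{2πi⟨l,x⟩}`. -/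
def expFn {d : ℕ} (l x : EuclideanSpace ℝ (Fin d)) : ℂ :=
  Complex.exp (((2 * Real.pi * (inner ℝ l x : ℝ) : ℝ) : ℂ) * Complex.I)

/-- `Λ` is a spectrum of `μ`: it is countable and `E(Λ) = {e^{2πi⟨λ,x⟩} : λ ∈ Λ}` is an
orthonormal basis of `L²(μ)` (i.e. an orthonormal family which is maximal). -/
def IsSpectrum {d : ℕ} (μ : Measure (EuclideanSpace ℝ (Fin d)))
    (Λ : Set (EuclideanSpace ℝ (Fin d))) : Prop :=
  Λ.Countable ∧
  (∀ l ∈ Λ, ∫ x, expFn l x * conj (expFn l x) ∂μ = 1) ∧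
  (∀ l ∈ Λ, ∀ l' ∈ Λ, l ≠ l' → ∫ x, expFn l x * conj (expFn l' x) ∂μ = 0) ∧
  (∀ f : Lp ℂ 2 μ, (∀ l ∈ Λ, ∫ x, f x * conj (expFn l x) ∂μ = 0) → f = 0)

/-- The cube `x + [-h,h]^d`. -/
def cube {d : ℕ} (x : EuclideanSpace ℝ (Fin d)) (h : ℝ) : Set (EuclideanSpace ℝ (Fin d)) :=
  {y | ∀ i, |y i - x i| ≤ h}

/-- The upper `r`-Beurling density
`D_r⁺(Λ) = limsup_{h→∞} sup_x #(Λ ∩ (x+[-h,h]^d))/h^r`. -/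
def beurlingDensity {d : ℕ} (r : ℝ) (Λ : Set (EuclideanSpace ℝ (Fin d))) : ℝ≥0∞ :=
  Filter.limsup (fun h : ℝ => ⨆ x : EuclideanSpace ℝ (Fin d),
    ((Λ ∩ cube x h).encard : ℝ≥0∞) / ENNReal.ofReal (h ^ r)) Filter.atTop

/-- The Beurling dimension `dim⁺(Λ) = sup {r > 0 : D_r⁺(Λ) > 0}`. -/
def beurlingDim {d : ℕ} (Λ : Set (EuclideanSpace ℝ (Fin d))) : ℝ≥0∞ :=
  ⨆ r ∈ {r : ℝ | 0 < r ∧ 0 < beurlingDensity r Λ}, ENNReal.ofReal r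

/-- `Λ = {λ_n}` is `b`-lacunary: `λ_0 = 0`, `|λ_1| ≥ b` and `|λ_{n+1}| ≥ b|λ_n|` for `n ≥ 1`. -/
def IsLacunary {d : ℕ} (b : ℝ) (Λ : Set (EuclideanSpace ℝ (Fin d))) : Prop :=
  ∃ f : ℕ → EuclideanSpace ℝ (Fin d), Λ = Set.range f ∧ f 0 = 0 ∧ b ≤ ‖f 1‖ ∧
    ∀ n, 1 ≤ n → b * ‖f n‖ ≤ ‖f (n + 1)‖

/-- The periodic zero set `Z(μ) = {ξ : μ̂(ξ+k) = 0 for all k ∈ ℤ^d}`. -/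
def periodicZeroSet {d : ℕ} (μ : Measure (EuclideanSpace ℝ (Fin d))) :
    Set (EuclideanSpace ℝ (Fin d)) :=
  {ξ | ∀ k : Fin d → ℤ, muHat μ (ξ + intCast k) = 0}

/-- `𝐁_n = B + R B + ⋯ + R^{n-1} B`, defined recursively. -/
def iterSum {d : ℕ} (R : Matrix (Fin d) (Fin d) ℤ) (B : Finset (Fin d → ℤ)) :
    ℕ → Finset (Fin d → ℤ)
  | 0 => {0}
  | n + 1 => B + (iterSum R B n).image fun v => R.mulVec v

end

/-!
Write `e(t) = e^{-2πit}`. A triple `(R, B, L)` is Hadamard iff `#B = #L` and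
`∑_{b ∈ B} e(⟨R⁻¹b, l' - l⟩) = 0` for distinct `l, l' ∈ L`. Such sums only see `l' - l` modulo
`Rᵗℤ^d`, because `⟨R⁻¹b, Rᵗk⟩ = ⟨b, k⟩ ∈ ℤ`; hence `L` is incongruent modulo `Rᵗℤ^d`. A square
matrix with orthonormal columns has orthonormal rows, so `(Rᵗ, L, B)` is Hadamard as well and `B` is
incongruent modulo `Rℤ^d`.
Hadamard triples compose: `(R₁, B₁, L₁)` and `(R₂, B₂, L₂)` give `(R₂R₁, B₂ + R₂B₁, L₁ + R₁ᵗL₂)`,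
since the exponential sum over `B₂ + R₂B₁` factors as a sum over `B₂` times the sum for `B₁`.
Iterating yields `(Rⁿ, 𝐁_n, 𝐋_n)`, and moving the points of `𝐋_n` within their classes modulo
`(Rᵗ)ⁿℤ^d` changes none of the exponential sums.
-/

open Matrix Finset

noncomputable section

variable {d : ℕ}

lemma matR_mul (M N : Matrix (Fin d) (Fin d) ℤ) : matR (M * N) = matR M * matR N :=
  map_mul (Int.castRingHom ℝ).mapMatrix M N

lemma matR_transpose (M : Matrix (Fin d) (Fin d) ℤ) : matR Mᵀ = (matR M)ᵀ := rfl

lemma det_matR (M : Matrix (Fin d) (Fin d) ℤ) : (matR M).det = M.det :=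
  ((Int.castRingHom ℝ).map_det M).symm

lemma isUnit_det_matR {M : Matrix (Fin d) (Fin d) ℤ} (hM : M.det ≠ 0) : IsUnit (matR M).det := by
  simpa [det_matR] using hM

theorem IsExpansive.det_ne_zero {R : Matrix (Fin d) (Fin d) ℤ} (hR : IsExpansive R) :
    R.det ≠ 0 := by
  intro h
  have hroot : (R.map (Int.cast : ℤ → ℂ)).charpoly.IsRoot 0 := by
    rw [Polynomial.IsRoot, ← Polynomial.coeff_zero_eq_eval_zero]
    have hdet : (R.map (Int.cast : ℤ → ℂ)).det = 0 := by
      change ((Int.castRingHom ℂ).mapMatrix R).det = 0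
      rw [← RingHom.map_det, h, map_zero]
    simpa [hdet] using det_eq_sign_charpoly_coeff (R.map (Int.cast : ℤ → ℂ))
  exact absurd (hR 0 hroot) (by norm_num)

lemma iterSum_succ' (S : Matrix (Fin d) (Fin d) ℤ) (L : Finset (Fin d → ℤ)) (n : ℕ) :
    iterSum S L (n + 1) = iterSum S L n + L.image ((S ^ n) *ᵥ ·) := by
  induction n with
  | zero => simp [iterSum, add_comm]
  | succ k ih =>
    rw [iterSum, ih, ← coe_mulVecLin, Finset.image_add, Finset.image_image, ← add_assoc]
    congr 1
    refine image_congr fun v _ => ?_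
    simp [mulVec_mulVec, pow_succ']

namespace HadamardTriple

def expNegTwoPiI (t : ℝ) : ℂ := Complex.exp (((-(2 * Real.pi * t) : ℝ) : ℂ) * Complex.I)

lemma expNegTwoPiI_add (s t : ℝ) : expNegTwoPiI (s + t) = expNegTwoPiI s * expNegTwoPiI t := by
  rw [expNegTwoPiI, expNegTwoPiI, expNegTwoPiI, ← Complex.exp_add]
  push_cast
  ring_nf

lemma expNegTwoPiI_intCast (k : ℤ) : expNegTwoPiI k = 1 := by
  rw [expNegTwoPiI, ← Complex.exp_int_mul_two_pi_mul_I (-k)]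
  push_cast
  ring_nf

lemma expNegTwoPiI_zero : expNegTwoPiI 0 = 1 := by
  exact_mod_cast expNegTwoPiI_intCast 0

lemma conj_expNegTwoPiI (t : ℝ) : conj (expNegTwoPiI t) = expNegTwoPiI (-t) := by
  rw [expNegTwoPiI, expNegTwoPiI, ← Complex.exp_conj]
  simp [Complex.conj_ofNat]

def castVec (v : Fin d → ℤ) : Fin d → ℝ := fun i => (v i : ℝ)

@[simp] lemma castVec_add (v w : Fin d → ℤ) : castVec (v + w) = castVec v + castVec w := by
  ext; simp [castVec]

@[simp] lemma castVec_sub (v w : Fin d → ℤ) : castVec (v - w) = castVec v - castVec w := by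
  ext; simp [castVec]

@[simp] lemma castVec_zero : castVec (0 : Fin d → ℤ) = 0 := by
  ext; simp [castVec]

lemma castVec_mulVec (M : Matrix (Fin d) (Fin d) ℤ) (v : Fin d → ℤ) :
    castVec (M *ᵥ v) = matR M *ᵥ castVec v :=
  funext fun i => RingHom.map_mulVec (Int.castRingHom ℝ) M v i

lemma castVec_dotProduct (v w : Fin d → ℤ) : castVec v ⬝ᵥ castVec w = ((v ⬝ᵥ w : ℤ) : ℝ) :=
  (RingHom.map_dotProduct (Int.castRingHom ℝ) v w).symm

/-- `⟨R⁻¹b, l⟩`; the inverse is the junk value `0` when `R` is singular. -/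
def pairing (R : Matrix (Fin d) (Fin d) ℤ) (b l : Fin d → ℤ) : ℝ :=
  ((matR R)⁻¹ *ᵥ castVec b) ⬝ᵥ castVec l

variable {R R₁ R₂ : Matrix (Fin d) (Fin d) ℤ}

lemma pairing_add_left (b b' l : Fin d → ℤ) :
    pairing R (b + b') l = pairing R b l + pairing R b' l := by
  simp [pairing, mulVec_add, add_dotProduct]

lemma pairing_add_right (b l l' : Fin d → ℤ) :
    pairing R b (l + l') = pairing R b l + pairing R b l' := by
  simp [pairing, dotProduct_add]

lemma pairing_sub_right (b l l' : Fin d → ℤ) :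
    pairing R b (l - l') = pairing R b l - pairing R b l' := by
  simp [pairing, dotProduct_sub]

@[simp] lemma pairing_zero_right (b : Fin d → ℤ) : pairing R b 0 = 0 := by
  simp [pairing]

lemma pairing_one (b l : Fin d → ℤ) : pairing 1 b l = ((b ⬝ᵥ l : ℤ) : ℝ) := by
  simp [pairing, matR, castVec_dotProduct]

lemma pairing_transpose (b l : Fin d → ℤ) : pairing Rᵀ l b = pairing R b l := by
  rw [pairing, pairing, matR_transpose, ← transpose_nonsing_inv, mulVec_transpose,
    ← dotProduct_mulVec, dotProduct_comm]

lemma pairing_mul_mulVec_left (hR₂ : R₂.det ≠ 0) (b l : Fin d → ℤ) :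
    pairing (R₂ * R₁) (R₂ *ᵥ b) l = pairing R₁ b l := by
  rw [pairing, pairing, matR_mul, Matrix.mul_inv_rev, castVec_mulVec, mulVec_mulVec, mul_assoc,
    nonsing_inv_mul _ (isUnit_det_matR hR₂), mul_one]

lemma pairing_mul_transpose_mulVec_right (hR₁ : R₁.det ≠ 0) (b l : Fin d → ℤ) :
    pairing (R₂ * R₁) b (R₁ᵀ *ᵥ l) = pairing R₂ b l := by
  rw [pairing, pairing, castVec_mulVec, matR_transpose, dotProduct_mulVec,
    vecMul_transpose, matR_mul, Matrix.mul_inv_rev, mulVec_mulVec, ← mul_assoc,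
    mul_nonsing_inv _ (isUnit_det_matR hR₁), one_mul]

lemma pairing_transpose_mulVec_right (hR : R.det ≠ 0) (b k : Fin d → ℤ) :
    pairing R b (Rᵀ *ᵥ k) = ((b ⬝ᵥ k : ℤ) : ℝ) := by
  simpa [pairing_one] using pairing_mul_transpose_mulVec_right (R₂ := 1) hR b k

def expSum (R : Matrix (Fin d) (Fin d) ℤ) (B : Finset (Fin d → ℤ)) (v : Fin d → ℤ) : ℂ :=
  ∑ b ∈ B, expNegTwoPiI (pairing R b v)

variable {B B₁ B₂ : Finset (Fin d → ℤ)}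

@[simp] lemma expSum_zero_right : expSum R B 0 = B.card := by
  simp [expSum, expNegTwoPiI_zero]

lemma expSum_add_transpose_mulVec (hR : R.det ≠ 0) (v k : Fin d → ℤ) :
    expSum R B (v + Rᵀ *ᵥ k) = expSum R B v :=
  sum_congr rfl fun b _ => by
    rw [pairing_add_right, pairing_transpose_mulVec_right hR, expNegTwoPiI_add,
      expNegTwoPiI_intCast, mul_one]

def IncongruentMod (M : Matrix (Fin d) (Fin d) ℤ) (S : Finset (Fin d → ℤ)) : Prop :=
  ∀ s ∈ S, ∀ s' ∈ S, ∀ k, s' = s + M *ᵥ k → s = s'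

lemma add_image_mulVec_eq_image_product (M : Matrix (Fin d) (Fin d) ℤ)
    (S T : Finset (Fin d → ℤ)) :
    S + T.image (M *ᵥ ·) = (S ×ˢ T).image fun p => p.1 + M *ᵥ p.2 := by
  ext x
  simp only [Finset.mem_add, Finset.mem_image, mem_product, Prod.exists]
  aesop

namespace IncongruentMod

variable {M : Matrix (Fin d) (Fin d) ℤ} {S : Finset (Fin d → ℤ)}

lemma injOn_add_mulVec (hS : IncongruentMod M S) (hM : M.det ≠ 0) (T : Finset (Fin d → ℤ)) :
    Set.InjOn (fun p : (Fin d → ℤ) × (Fin d → ℤ) => p.1 + M *ᵥ p.2) ↑(S ×ˢ T) := by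
  rintro ⟨s, t⟩ hst ⟨s', t'⟩ hst' h
  simp only [mem_coe, mem_product] at hst hst' h
  obtain rfl : s = s' := hS s hst.1 s' hst'.1 (t - t') (by rw [mulVec_sub]; linear_combination -h)
  rw [mulVec_injective_of_det_ne_zero hM (add_left_cancel h)]

lemma card_add_image_mulVec (hS : IncongruentMod M S) (hM : M.det ≠ 0)
    (T : Finset (Fin d → ℤ)) :
    (S + T.image (M *ᵥ ·)).card = S.card * T.card := by
  rw [add_image_mulVec_eq_image_product, card_image_of_injOn (hS.injOn_add_mulVec hM T),
    card_product]

lemma sum_add_image_mulVec (hS : IncongruentMod M S) (hM : M.det ≠ 0)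
    (T : Finset (Fin d → ℤ)) (f : (Fin d → ℤ) → ℂ) :
    ∑ x ∈ S + T.image (M *ᵥ ·), f x = ∑ s ∈ S, ∑ t ∈ T, f (s + M *ᵥ t) := by
  rw [add_image_mulVec_eq_image_product, sum_image (hS.injOn_add_mulVec hM T), sum_product]

end IncongruentMod

lemma expSum_mul_add_image_mulVec (hB₂ : IncongruentMod R₂ B₂) (hR₁ : R₁.det ≠ 0)
    (hR₂ : R₂.det ≠ 0) (u w : Fin d → ℤ) :
    expSum (R₂ * R₁) (B₂ + B₁.image (R₂ *ᵥ ·)) (u + R₁ᵀ *ᵥ w) =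
      (∑ b ∈ B₂, expNegTwoPiI (pairing (R₂ * R₁) b u + pairing R₂ b w)) * expSum R₁ B₁ u := by
  rw [expSum, hB₂.sum_add_image_mulVec hR₂, expSum, sum_mul]
  refine sum_congr rfl fun b₂ _ => ?_
  rw [mul_sum]
  refine sum_congr rfl fun b₁ _ => ?_
  rw [pairing_add_left, pairing_add_right, pairing_add_right,
    pairing_mul_transpose_mulVec_right hR₁, pairing_mul_mulVec_left hR₂,
    pairing_mul_mulVec_left hR₂, pairing_transpose_mulVec_right hR₁,
    expNegTwoPiI_add, expNegTwoPiI_add (pairing R₁ b₁ u), expNegTwoPiI_intCast, mul_one]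

end HadamardTriple

open HadamardTriple

variable {R R₁ R₂ : Matrix (Fin d) (Fin d) ℤ} {B L B₁ L₁ B₂ L₂ : Finset (Fin d → ℤ)}

lemma hadamardMatrix_apply (b : {b // b ∈ B}) (l : {l // l ∈ L}) :
    hadamardMatrix R B L b l =
      ((1 / Real.sqrt B.card : ℝ) : ℂ) * expNegTwoPiI (pairing R b l) :=
  rfl

lemma conjTranspose_mul_hadamardMatrix_apply (l l' : {l // l ∈ L}) :
    ((hadamardMatrix R B L)ᴴ * hadamardMatrix R B L) l l' =
      (B.card : ℂ)⁻¹ * expSum R B (l' - l) := by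
  have hscalar : (1 / Real.sqrt B.card) * (1 / Real.sqrt B.card) = (B.card : ℝ)⁻¹ := by
    rw [one_div_mul_one_div, Real.mul_self_sqrt (Nat.cast_nonneg _), one_div]
  rw [mul_apply, expSum, mul_sum, ← sum_coe_sort B]
  refine sum_congr rfl fun b _ => ?_
  rw [conjTranspose_apply, hadamardMatrix_apply, hadamardMatrix_apply, star_mul',
    Complex.star_def, Complex.conj_ofReal, conj_expNegTwoPiI, mul_mul_mul_comm,
    ← Complex.ofReal_mul, hscalar, ← expNegTwoPiI_add, pairing_sub_right, neg_add_eq_sub, Complex.ofReal_inv, Complex.ofReal_natCast]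

theorem isHadamardTriple_iff :
    IsHadamardTriple R B L ↔
      B.card = L.card ∧ ∀ l ∈ L, ∀ l' ∈ L, l ≠ l' → expSum R B (l' - l) = 0 := by
  refine ⟨fun ⟨hcard, hU⟩ => ⟨hcard, fun l hl l' hl' hne => ?_⟩,
    fun ⟨hcard, horth⟩ => ⟨hcard, ?_⟩⟩
  · have hq : (B.card : ℂ) ≠ 0 := by
      rw [hcard]; exact_mod_cast (card_ne_zero_of_mem hl)
    have h := congrFun₂ hU ⟨l, hl⟩ ⟨l', hl'⟩
    rw [conjTranspose_mul_hadamardMatrix_apply, one_apply_ne (by simpa using hne)] at h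
    exact (mul_eq_zero.1 h).resolve_left (inv_ne_zero hq)
  · ext ⟨l, hl⟩ ⟨l', hl'⟩
    rw [conjTranspose_mul_hadamardMatrix_apply]
    by_cases h : l = l'
    · subst h
      have hq : (B.card : ℂ) ≠ 0 := by
        rw [hcard]; exact_mod_cast (card_ne_zero_of_mem hl)
      rw [sub_self, expSum_zero_right, one_apply_eq, inv_mul_cancel₀ hq]
    · rw [horth l hl l' hl' h, mul_zero, one_apply_ne (by simpa using h)]

namespace IsHadamardTriple

theorem transpose (hH : IsHadamardTriple R B L) : IsHadamardTriple Rᵀ L B := by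
  obtain ⟨hcard, hU⟩ := hH
  have hT : hadamardMatrix Rᵀ L B = (hadamardMatrix R B L)ᵀ := by
    ext l b
    rw [hadamardMatrix_apply, transpose_apply, hadamardMatrix_apply, pairing_transpose, hcard]
  have hU' : hadamardMatrix R B L * (hadamardMatrix R B L)ᴴ = 1 :=
    (mul_eq_one_comm_of_equiv (Fintype.equivOfCardEq (by simp [hcard]))).1 hU
  refine ⟨hcard.symm, ?_⟩
  rw [hT, conjTranspose_transpose_eq_transpose_conjTranspose, ← transpose_mul, hU',
    transpose_one]

theorem incongruentMod_transpose (hH : IsHadamardTriple R B L) (hR : R.det ≠ 0) :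
    IncongruentMod Rᵀ L := by
  rintro l hl _ hl' k rfl
  by_contra hne
  have h := (isHadamardTriple_iff.1 hH).2 l hl _ hl' hne
  rw [add_sub_cancel_left, ← zero_add (Rᵀ *ᵥ k), expSum_add_transpose_mulVec hR,
    expSum_zero_right, Nat.cast_eq_zero, hH.1] at h
  exact card_ne_zero_of_mem hl h

theorem incongruentMod (hH : IsHadamardTriple R B L) (hR : R.det ≠ 0) : IncongruentMod R B := by
  simpa using hH.transpose.incongruentMod_transpose (by rwa [det_transpose])

theorem mul (h₁ : IsHadamardTriple R₁ B₁ L₁) (h₂ : IsHadamardTriple R₂ B₂ L₂)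
    (hR₁ : R₁.det ≠ 0) (hR₂ : R₂.det ≠ 0) :
    IsHadamardTriple (R₂ * R₁) (B₂ + B₁.image (R₂ *ᵥ ·)) (L₁ + L₂.image (R₁ᵀ *ᵥ ·)) := by
  have hB₂ := h₂.incongruentMod hR₂
  have hL₁ := h₁.incongruentMod_transpose hR₁
  rw [isHadamardTriple_iff] at h₁ h₂ ⊢
  refine ⟨?_, ?_⟩
  · rw [hB₂.card_add_image_mulVec hR₂, hL₁.card_add_image_mulVec (by rwa [det_transpose]),
      h₁.1, h₂.1, mul_comm]
  simp only [add_image_mulVec_eq_image_product R₁ᵀ L₁ L₂, Finset.mem_image, mem_product,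
    Prod.exists]
  rintro _ ⟨l₁, l₂, ⟨hl₁, hl₂⟩, rfl⟩ _ ⟨l₁', l₂', ⟨hl₁', hl₂'⟩, rfl⟩ hne
  rw [show l₁' + R₁ᵀ *ᵥ l₂' - (l₁ + R₁ᵀ *ᵥ l₂) = (l₁' - l₁) + R₁ᵀ *ᵥ (l₂' - l₂) by
      rw [mulVec_sub]; abel,
    expSum_mul_add_image_mulVec hB₂ hR₁ hR₂]
  by_cases h : l₁ = l₁'
  · subst h
    have hl : l₂ ≠ l₂' := fun h => hne (by rw [h])
    simp only [sub_self, pairing_zero_right, zero_add]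
    rw [← expSum, h₂.2 l₂ hl₂ l₂' hl₂' hl, zero_mul]
  · rw [h₁.2 l₁ hl₁ l₁' hl₁' h, mul_zero]

theorem iterate (hH : IsHadamardTriple R B L) (hR : R.det ≠ 0) :
    ∀ n, IsHadamardTriple (R ^ n) (iterSum R B n) (iterSum Rᵀ L n)
  | 0 => by simp [isHadamardTriple_iff, iterSum]
  | n + 1 => by
    have h := (hH.iterate hR n).mul hH (by rw [det_pow]; exact pow_ne_zero n hR) hR
    rwa [← pow_succ', transpose_pow, ← iterSum_succ'] at h

theorem image_add_transpose_mulVec (hH : IsHadamardTriple R B L) (hR : R.det ≠ 0)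
    (m : (Fin d → ℤ) → (Fin d → ℤ)) :
    IsHadamardTriple R B (L.image fun l => l + Rᵀ *ᵥ m l) := by
  have hL := hH.incongruentMod_transpose hR
  have hinj : Set.InjOn (fun l => l + Rᵀ *ᵥ m l) L := fun l hl l' hl' h =>
    hL l hl l' hl' (m l - m l') (by rw [mulVec_sub]; linear_combination h.symm)
  rw [isHadamardTriple_iff] at hH ⊢
  refine ⟨by rw [card_image_of_injOn hinj, hH.1], ?_⟩
  simp only [Finset.mem_image]
  rintro _ ⟨l, hl, rfl⟩ _ ⟨l', hl', rfl⟩ hne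
  rw [show l' + Rᵀ *ᵥ m l' - (l + Rᵀ *ᵥ m l) = (l' - l) + Rᵀ *ᵥ (m l' - m l) by
      rw [mulVec_sub]; abel,
    expSum_add_transpose_mulVec hR]
  exact hH.2 l hl l' hl' fun h => hne (by rw [h])

end IsHadamardTriple

end

theorem hadamard_triple_iterate_mod_general
    {d : ℕ} (R : Matrix (Fin d) (Fin d) ℤ) (B L : Finset (Fin d → ℤ))
    (hR : IsExpansive R) (hH : IsHadamardTriple R B L) (n : ℕ)
    (L' : Finset (Fin d → ℤ))
    (hL' : ∃ m : (Fin d → ℤ) → (Fin d → ℤ),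
      L' = (iterSum R.transpose L n).image fun l => l + (R.transpose ^ n).mulVec (m l)) :
    IsHadamardTriple (R ^ n) (iterSum R B n) L' := by
  obtain ⟨m, rfl⟩ := hL'
  have hdet := hR.det_ne_zero
  rw [← transpose_pow]
  exact (hH.iterate hdet n).image_add_transpose_mulVec
    (by rw [det_pow]; exact pow_ne_zero n hdet) m

/-- If `(R,B,L)` is a Hadamard triple and `𝐋̃_n ≡ 𝐋_n (mod (Rᵗ)ⁿ ℤ^d)`,
then `(Rⁿ, 𝐁_n, 𝐋̃_n)` is also a Hadamard triple. -/
theorem hadamard_triple_iterate_mod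
    {d : ℕ} (R : Matrix (Fin d) (Fin d) ℤ) (B L : Finset (Fin d → ℤ))
    (hR : IsExpansive R) (hH : IsHadamardTriple R B L) (n : ℕ) (hn : 1 ≤ n)
    (L' : Finset (Fin d → ℤ))
    (hL' : ∃ m : (Fin d → ℤ) → (Fin d → ℤ),
      L' = (iterSum R.transpose L n).image fun l => l + (R.transpose ^ n).mulVec (m l)) :
    IsHadamardTriple (R ^ n) (iterSum R B n) L' :=
  hadamard_triple_iterate_mod_general R B L hR hH n L' hL'
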